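/- arXiv:2601.16505 — 6 statements merged into one kernel-verified Lean document; each statement's English description precedes it below -/
import Mathlib

section
/- Let $R$ be a commutative ring and let $S$ be an $n \times d$ matrix over $R$. For a strictly increasing sequence $\alpha : [d] \to [n]$ define the Plücker coordinate $p_\alpha = \det S_{\alpha,\bullet}$, where $S_{\alpha,\bullet}$ is the $d\times d$ submatrix of $S$ with rows indexed by $\alpha$. For a sequence $\beta : [d-1] \to [n]$ and $i \in [n]$, let $\beta \smallfrown i$ denote $\beta$ with $i$ appended. Then every column of the Plücker matrix $P = (p_{\beta\smallfrown i})_{i \in [n],\ \beta}$ is an $R$-linear combination of the columns of $S$; in particular, the column space of $P$ is contained in the column space of $S$. -/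
/-- Every column of the Plücker matrix of an `n × (d+1)` matrix `S` is an `R`-linear
combination of the columns of `S`; in particular the column space of the Plücker matrix is
contained in the column space of `S`. -/
theorem stmt1 (R : Type*) [CommRing R] (n d : ℕ) (S : Matrix (Fin n) (Fin (d + 1)) R) :
    (∀ β : Fin d → Fin n, StrictMono β →
      ∃ c : Fin (d + 1) → R, ∀ i : Fin n,
        (S.submatrix (Fin.snoc β i) id).det = ∑ j, c j * S i j) ∧
    Submodule.span R {v : Fin n → R | ∃ β : Fin d → Fin n, StrictMono β ∧
        v = fun i => (S.submatrix (Fin.snoc β i) id).det} ≤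
      Submodule.span R {v : Fin n → R | ∃ j : Fin (d + 1), v = fun i => S i j} := by
  have key : ∀ β : Fin d → Fin n,
      ∃ c : Fin (d + 1) → R, ∀ i : Fin n,
        (S.submatrix (Fin.snoc β i) id).det = ∑ j, c j * S i j := by
    intro β
    refine ⟨fun j => (-1) ^ (d + (j : ℕ)) *
      (S.submatrix β j.succAbove).det, fun i => ?_⟩
    rw [Matrix.det_succ_row _ (Fin.last d)]
    refine Finset.sum_congr rfl fun j _ => ?_
    have h1 : (S.submatrix (Fin.snoc β i) id) (Fin.last d) j = S i j := by
      simp [Fin.snoc_last]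
    have h2 : (S.submatrix (Fin.snoc β i) id).submatrix (Fin.last d).succAbove j.succAbove
        = S.submatrix β j.succAbove := by
      ext a b
      simp [Matrix.submatrix, Fin.succAbove_last, Fin.snoc_castSucc]
    rw [h1, h2, Fin.val_last]
    ring
  constructor
  · exact fun β _ => key β
  · rw [Submodule.span_le]
    rintro v ⟨β, -, rfl⟩
    obtain ⟨c, hc⟩ := key β
    have : (fun i => (S.submatrix (Fin.snoc β i) id).det)
        = ∑ j, c j • (fun i => S i j) := by
      ext i
      simpa using hc i
    rw [this]
    exact Submodule.sum_mem _ fun j _ =>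
      Submodule.smul_mem _ _ (Submodule.subset_span ⟨j, rfl⟩)
end

section
/- Let $R$ be a local ring, and let $S$ be an $n \times d$ matrix over $R$ such that some $d \times d$ minor of $S$ is a unit. Let $P$ be the Plücker matrix of $S$, i.e. the $n \times \binom{n}{d-1}$ matrix with entries $p_{\beta\smallfrown i} = \det S_{(\beta\smallfrown i),\bullet}$ for $i \in [n]$ and $\beta$ a strictly increasing sequence $[d-1]\to[n]$. Then the column space of $P$ equals the column space of $S$. -/
open Matrix Finset

/-- Laplace expansion along the last row of a snoc-matrix. -/
lemma det_snoc_expand {R : Type*} [CommRing R] {d : ℕ} (M : Fin d → Fin (d + 1) → R)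
    (b : Fin (d + 1) → R) :
    (Matrix.of (Fin.snoc M b)).det =
      ∑ m : Fin (d + 1), (-1) ^ (d + (m : ℕ)) * b m *
        ((Matrix.of M).submatrix id m.succAbove).det := by
  rw [Matrix.det_succ_row _ (Fin.last d)]
  refine Finset.sum_congr rfl fun m _ => ?_
  congr 1
  · simp [Fin.snoc_last]
  · congr 1
    ext k l
    simp [Fin.succAbove_last, Fin.snoc_castSucc]

lemma det_updateRow_eq_snoc {R : Type*} [CommRing R] {d : ℕ}
    (A : Matrix (Fin (d + 1)) (Fin (d + 1)) R) (j : Fin (d + 1)) (b : Fin (d + 1) → R) :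
    (A.updateRow j b).det =
      (-1) ^ ((j : ℕ) + d) * (Matrix.of (Fin.snoc (fun k => A (j.succAbove k)) b)).det := by
  rw [det_snoc_expand, Matrix.det_succ_row _ j, Finset.mul_sum]
  refine Finset.sum_congr rfl fun m _ => ?_
  have hsign : (-1 : R) ^ ((j : ℕ) + d) * (-1) ^ (d + (m : ℕ)) = (-1) ^ ((j : ℕ) + (m : ℕ)) := by
    rw [← pow_add, show (j : ℕ) + d + (d + m) = ((j : ℕ) + m) + 2 * d by ring, pow_add, pow_mul]
    simp
  have hminor : (A.updateRow j b).submatrix j.succAbove m.succAbove =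
      (Matrix.of fun k => A (j.succAbove k)).submatrix id m.succAbove := by
    ext k l
    simp [Matrix.updateRow_ne (Fin.succAbove_ne j k)]
  rw [hminor, Matrix.updateRow_self]
  rw [← mul_assoc, ← mul_assoc, hsign]

/-- Over a local ring, if some maximal minor of `S` is a unit, then the column space of the
Plücker matrix of `S` equals the column space of `S`. -/
theorem stmt3 (R : Type*) [CommRing R] [IsLocalRing R] (n d : ℕ)
    (S : Matrix (Fin n) (Fin (d + 1)) R)
    (h : ∃ α : Fin (d + 1) → Fin n, StrictMono α ∧ IsUnit (S.submatrix α id).det) :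
    Submodule.span R {v : Fin n → R | ∃ β : Fin d → Fin n, StrictMono β ∧
        v = fun i => (S.submatrix (Fin.snoc β i) id).det} =
      Submodule.span R {v : Fin n → R | ∃ j : Fin (d + 1), v = fun i => S i j} := by
  -- Expansion of the Plücker entry along the last row.
  have key : ∀ (β : Fin d → Fin n) (i : Fin n),
      (S.submatrix (Fin.snoc β i) id).det =
        ∑ m : Fin (d + 1), (-1) ^ (d + (m : ℕ)) * S i m * (S.submatrix β m.succAbove).det := by
    intro β i
    have hM : S.submatrix (Fin.snoc β i) id =
        Matrix.of (Fin.snoc (fun k l => S (β k) l) (fun l => S i l)) := by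
      ext k l
      refine Fin.lastCases ?_ (fun k => ?_) k <;> simp [Fin.snoc_last, Fin.snoc_castSucc]
    rw [hM, det_snoc_expand]
    refine Finset.sum_congr rfl fun m _ => ?_
    congr 1
  apply le_antisymm
  · rw [Submodule.span_le]
    rintro v ⟨β, hβ, rfl⟩
    have hv : (fun i => (S.submatrix (Fin.snoc β i) id).det) =
        ∑ m : Fin (d + 1),
          ((-1 : R) ^ (d + (m : ℕ)) * (S.submatrix β m.succAbove).det) • (fun i => S i m) := by
      funext i
      rw [key β i]
      simp only [Finset.sum_apply, Pi.smul_apply, smul_eq_mul]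
      exact Finset.sum_congr rfl fun m _ => by ring
    rw [hv]
    exact Submodule.sum_mem _ fun m _ => Submodule.smul_mem _ _
      (Submodule.subset_span ⟨m, rfl⟩)
  · rw [Submodule.span_le]
    rintro v ⟨m, rfl⟩
    obtain ⟨α, hα, hA⟩ := h
    set A := S.submatrix α id with hAdef
    -- Cramer identity along rows.
    have cram : ∀ i : Fin n, A.det * S i m =
        ∑ j : Fin (d + 1), A j m * (A.updateRow j (fun l => S i l)).det := by
      intro i
      have := congrFun (Matrix.mulVec_cramer Aᵀ (fun l => S i l)) m
      simp only [Matrix.mulVec, dotProduct, Pi.smul_apply, smul_eq_mul,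
        Matrix.det_transpose, Matrix.cramer_apply, Matrix.transpose_apply] at this
      rw [← this]
      refine Finset.sum_congr rfl fun j _ => ?_
      rw [Matrix.updateCol_transpose, Matrix.det_transpose]
    -- relate updateRow determinant to the Plücker vector
    have upd : ∀ (j : Fin (d + 1)) (i : Fin n),
        (A.updateRow j (fun l => S i l)).det =
          (-1) ^ ((j : ℕ) + d) * (S.submatrix (Fin.snoc (α ∘ j.succAbove) i) id).det := by
      intro j i
      rw [det_updateRow_eq_snoc]
      congr 2
      ext k l
      refine Fin.lastCases ?_ (fun k => ?_) k <;>
        simp [Fin.snoc_last, Fin.snoc_castSucc, hAdef]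
    obtain ⟨u, hu⟩ := hA
    have hv : (fun i => S i m) = ∑ j : Fin (d + 1),
        (((u⁻¹ : Rˣ) : R) * A j m * (-1) ^ ((j : ℕ) + d)) •
          (fun i => (S.submatrix (Fin.snoc (α ∘ j.succAbove) i) id).det) := by
      funext i
      simp only [Finset.sum_apply, Pi.smul_apply, smul_eq_mul]
      have := cram i
      simp only [upd] at this
      have h1 : ((u⁻¹ : Rˣ) : R) * (A.det * S i m) = S i m := by
        rw [← mul_assoc, ← hu, Units.inv_mul, one_mul]
      rw [← h1, this, Finset.mul_sum]
      refine Finset.sum_congr rfl fun j _ => ?_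
      ring
    rw [hv]
    refine Submodule.sum_mem _ fun j _ => Submodule.smul_mem _ _
      (Submodule.subset_span ⟨α ∘ j.succAbove, hα.comp (Fin.strictMono_succAbove j), rfl⟩)
end

section
/- Let $k$ be a field and let $I \subset k[s_{i,j} : i \in [n], j \in [d]]$ be an ideal that is stable under the right action of $\mathrm{GL}_d$, meaning: for every commutative $k$-algebra $R$, every $n\times d$ matrix $T$ over $R$ with $f(T) = 0$ for all $f \in I$, and every $B \in \mathrm{GL}_d(R)$, one has $f(TB) = 0$ for all $f \in I$. Then for every local $k$-algebra $R$, every $n\times d$ matrix $T$ over $R$ annihilating $I$, every $g \in I$, and every (not necessarily invertible) $B \in \mathrm{Mat}_d(R)$, one has $g(TB) = 0$. -/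
universe u

/-- If an ideal `I` of the polynomial ring in the entries of an `n × d` matrix is stable under
the right `GL_d`-action, then for a local `k`-algebra `R` and a matrix `T` annihilating `I`,
every `g ∈ I` vanishes at `T * B` for every (not necessarily invertible) matrix `B`. -/
theorem stmt5 (k : Type u) [Field k] (n d : ℕ)
    (I : Ideal (MvPolynomial (Fin n × Fin d) k))
    (hstable : ∀ (R : Type u) [CommRing R] [Algebra k R]
      (T : Matrix (Fin n) (Fin d) R),
      (∀ f ∈ I, MvPolynomial.aeval (fun p => T p.1 p.2) f = 0) →
      ∀ B : Matrix (Fin d) (Fin d) R, IsUnit B.det →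
        ∀ f ∈ I, MvPolynomial.aeval (fun p => (T * B) p.1 p.2) f = 0) :
    ∀ (R : Type u) [CommRing R] [Algebra k R] [IsLocalRing R]
      (T : Matrix (Fin n) (Fin d) R),
      (∀ f ∈ I, MvPolynomial.aeval (fun p => T p.1 p.2) f = 0) →
      ∀ g ∈ I, ∀ B : Matrix (Fin d) (Fin d) R,
        MvPolynomial.aeval (fun p => (T * B) p.1 p.2) g = 0 := by
  intro R _ _ _ T hT g hg B
  classical
  -- the matrix `B + t • 1` over `R[t]`, whose determinant is the char. polynomial of `-B`
  let B' : Matrix (Fin d) (Fin d) (Polynomial R) := Matrix.charmatrix (-B)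
  have hdetB' : B'.det = (-B).charpoly := rfl
  have hmonic : B'.det.Monic := by rw [hdetB']; exact Matrix.charpoly_monic _
  -- the localization of `R[t]` inverting `det B'`
  let p : Polynomial R := B'.det
  let L := Localization.Away p
  let φ : Polynomial R →+* L := algebraMap (Polynomial R) L
  -- `T` over `L` still annihilates `I`
  have hTL : ∀ f ∈ I, MvPolynomial.aeval
      (fun q : Fin n × Fin d => (T.map (algebraMap R L)) q.1 q.2) f = 0 := by
    intro f hf
    have : (fun q : Fin n × Fin d => (T.map (algebraMap R L)) q.1 q.2)
        = (algebraMap R L) ∘ (fun q : Fin n × Fin d => T q.1 q.2) := rfl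
    rw [this, MvPolynomial.aeval_algebraMap_apply, hT f hf, map_zero]
  -- `B'` over `L` is invertible
  have hunit : IsUnit ((B'.map φ).det) := by
    rw [show B'.map φ = φ.mapMatrix B' from rfl, ← RingHom.map_det]
    exact IsLocalization.Away.algebraMap_isUnit p
  -- apply stability over `L`
  have h0 : MvPolynomial.aeval
      (fun q : Fin n × Fin d => ((T.map (algebraMap R L)) * (B'.map φ)) q.1 q.2) g = 0 :=
    hstable L (T.map (algebraMap R L)) hTL (B'.map φ) hunit g hg
  -- rewrite as the image under `φ` of a polynomial identity over `R[t]`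
  have hmap : (T.map (algebraMap R L)) * (B'.map φ)
      = ((T.map Polynomial.C) * B').map φ := by
    rw [Matrix.map_mul (f := φ), Matrix.map_map]
    rfl
  rw [hmap] at h0
  have h1 : φ (MvPolynomial.aeval
      (fun q : Fin n × Fin d => ((T.map Polynomial.C) * B') q.1 q.2) g) = 0 := by
    have : (fun q : Fin n × Fin d => (((T.map Polynomial.C) * B').map φ) q.1 q.2)
        = (algebraMap (Polynomial R) L) ∘
          (fun q : Fin n × Fin d => ((T.map Polynomial.C) * B') q.1 q.2) := rfl
    rw [this, MvPolynomial.aeval_algebraMap_apply] at h0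
    exact h0
  -- `φ` is injective since `p` is monic, hence a nonzerodivisor
  have hinj : Function.Injective φ := by
    refine IsLocalization.injective (M := Submonoid.powers p) L ?_
    rintro x ⟨m, rfl⟩
    exact (hmonic.pow m).mem_nonZeroDivisors
  have h2 : MvPolynomial.aeval
      (fun q : Fin n × Fin d => ((T.map Polynomial.C) * B') q.1 q.2) g = 0 := by
    apply hinj; rw [h1, map_zero]
  -- evaluate at `t = 0`
  let ε : Polynomial R →ₐ[k] R := (Polynomial.aeval (0 : R)).restrictScalars k
  have h3 := congrArg ε h2
  rw [map_zero, MvPolynomial.comp_aeval_apply] at h3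
  have hε : (fun q : Fin n × Fin d => ε (((T.map Polynomial.C) * B') q.1 q.2))
      = fun q : Fin n × Fin d => (T * B) q.1 q.2 := by
    funext q
    show Polynomial.eval 0 (((T.map Polynomial.C) * B') q.1 q.2) = (T * B) q.1 q.2
    simp only [Matrix.mul_apply, Polynomial.eval_finset_sum, Polynomial.eval_mul,
      Matrix.map_apply, Polynomial.eval_C]
    refine Finset.sum_congr rfl fun j _ => ?_
    congr 1
    show Polynomial.eval 0 (Matrix.charmatrix (-B) j q.2) = B j q.2
    by_cases h : j = q.2
    · subst h; simp
    · simp [Matrix.charmatrix_apply_ne _ _ _ h, h]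
  rwa [hε] at h3
end

section
/- Let $R$ be a local ring, let $S \in \mathrm{Mat}_{n\times d}(R)$ have some $d\times d$ minor equal to a unit, let $M \subseteq R^n$ be the column space of $S$, and let $U \subseteq R^n$ be the submodule generated by the columns $f_0,\dots,f_{c-1}$ of a matrix $F \in \mathrm{Mat}_{n\times c}(R)$. Then the following are equivalent: (1) $U \subseteq M$; (2) all $(d+1)\times(d+1)$ minors of the block matrix $(S \mid F)$ vanish; (3) all $(d+1)\times(d+1)$ minors of $(S\mid F)$ using exactly $d$ columns from $S$ and one column from $F$ vanish; (4) $p \wedge f_i = 0$ in $\bigwedge^{d+1} R^n$ for all $i$, where $p = s_0 \wedge \cdots \wedge s_{d-1}$ is the wedge of the columns of $S$. -/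
/-!
Since `S` has a unit maximal minor, the last column of any `(d+1)`-square minor of `(S ∣ F)`
containing the rows of that unit minor is, by Laplace expansion along the extra row, a linear
combination of the columns of `S` with coefficients independent of the extra row. So the
vanishing of these minors puts every column of `F` in the column space of `S`. Conversely, if
the columns of `F` lie in the span of the `d` columns of `S`, every alternating map of `d + 1`
columns of `(S ∣ F)` vanishes, in particular every minor and the wedge product.
-/

open Matrix ExteriorAlgebra Submodule Set

section

variable {R : Type*} [CommRing R]

namespace AlternatingMap

variable {M N : Type*} [AddCommGroup M] [Module R M] [AddCommGroup N] [Module R N]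

theorem map_eq_zero_of_forall_mem_span {ι κ : Type*} [Fintype ι] [Fintype κ]
    (f : M [⋀^ι]→ₗ[R] N) {s : κ → M} (hcard : Fintype.card κ < Fintype.card ι) {v : ι → M}
    (hv : ∀ k, v k ∈ span R (range s)) : f v = 0 := by
  classical
  choose C hC using fun k => (mem_span_range_iff_exists_fun R).1 (hv k)
  obtain rfl : v = fun k => ∑ j, C k j • s j := funext fun k => (hC k).symm
  rw [← f.coe_multilinearMap, MultilinearMap.map_sum]
  refine Finset.sum_eq_zero fun r _ => ?_
  have hr : ¬Function.Injective (s ∘ r) := fun h =>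
    hcard.not_ge (Fintype.card_le_of_injective r h.of_comp)
  rw [MultilinearMap.map_smul_univ, f.coe_multilinearMap]
  exact smul_eq_zero_of_right _ (f.map_eq_zero_of_not_injective (s ∘ r) hr)

theorem map_eq_zero_of_ιMulti_eq_zero {n : ℕ} (f : M [⋀^Fin n]→ₗ[R] N) {v : Fin n → M}
    (hv : ιMulti R n v = 0) : f v = 0 := by
  classical
  simpa [hv] using (liftAlternating_apply_ιMulti (Pi.single n f) v).symm

end AlternatingMap

theorem ExteriorAlgebra.prod_map_ι_mul_ι {M : Type*} [AddCommGroup M] [Module R M] {d : ℕ}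
    (v : Fin d → M) (x : M) :
    ((List.finRange d).map fun j => ι R (v j)).prod * ι R x = ιMulti R (d + 1) (Fin.snoc v x) := by
  rw [ιMulti_apply, List.ofFn_succ']
  simp only [Fin.snoc_castSucc, Fin.snoc_last, List.prod_concat, List.ofFn_eq_map]

namespace Matrix

variable {m n ι : Type*} [Fintype ι] [DecidableEq ι]

def minorAlternating (ρ : ι → m) : (m → R) [⋀^ι]→ₗ[R] R :=
  detRowAlternating.compLinearMap (LinearMap.funLeft R R ρ)

theorem minorAlternating_apply_col_comp (A : Matrix m n R) (ρ : ι → m) (σ : ι → n) :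
    minorAlternating ρ (A.col ∘ σ) = (A.submatrix ρ σ).det := by
  rw [← det_transpose]
  rfl

theorem det_submatrix_eq_zero_of_col_mem_span {κ : Type*} [Fintype κ] (A : Matrix m n R)
    {s : κ → m → R} (hcard : Fintype.card κ < Fintype.card ι)
    (hA : ∀ j, A.col j ∈ span R (range s)) (ρ : ι → m) (σ : ι → n) :
    (A.submatrix ρ σ).det = 0 := by
  rw [← minorAlternating_apply_col_comp]
  exact AlternatingMap.map_eq_zero_of_forall_mem_span _ hcard fun k => hA (σ k)

theorem col_last_mem_span_of_det_submatrix_snoc_eq_zero {d : ℕ}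
    (A : Matrix m (Fin (d + 1)) R) {α : Fin d → m}
    (hα : IsUnit (A.submatrix α Fin.castSucc).det)
    (hA : ∀ i, (A.submatrix (Fin.snoc α i) id).det = 0) :
    A.col (Fin.last d) ∈ span R (range (A.col ∘ Fin.castSucc)) := by
  set c : Fin (d + 1) → R := fun j => (-1) ^ (d + j : ℕ) * (A.submatrix α j.succAbove).det
  have hlaplace : ∑ j, c j • A.col j = 0 := by
    funext i
    rw [Pi.zero_apply, ← hA i, det_succ_row _ (Fin.last d)]
    simp only [Finset.sum_apply, Pi.smul_apply, col_apply, smul_eq_mul, submatrix_apply,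
      Fin.snoc_last, id, submatrix_submatrix, Fin.succAbove_last, Fin.snoc_comp_castSucc]
    exact Finset.sum_congr rfl fun j _ => by simp only [c, Fin.val_last, Function.id_comp]; ring
  rw [Fin.sum_univ_castSucc, add_eq_zero_iff_eq_neg'] at hlaplace
  have hc : IsUnit (c (Fin.last d)) := by
    simpa [c, Fin.succAbove_last] using hα
  rw [← smul_mem_iff_of_isUnit _ hc, hlaplace]
  exact neg_mem (sum_mem fun j _ => smul_mem _ _ (subset_span ⟨j, rfl⟩))

theorem setOf_exists_eq_col {α : Type*} (A : Matrix m n α) :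
    {v : m → α | ∃ j : n, v = fun i => A i j} = range A.col :=
  Set.ext fun _ => exists_congr fun _ => eq_comm

theorem col_fromCols_comp_snoc {α : Type*} {d : ℕ} (A : Matrix m (Fin d) α)
    (B : Matrix m n α) (l : n) :
    (fromCols A B).col ∘ Fin.snoc Sum.inl (Sum.inr l) = Fin.snoc A.col (B.col l) := by
  ext k i
  refine Fin.lastCases ?_ (fun j => ?_) k <;> simp [col_apply]

end Matrix

section ColumnSpace

variable {n d c : ℕ} (S : Matrix (Fin n) (Fin d) R) (F : Matrix (Fin n) (Fin c) R)

theorem det_submatrix_fromCols_eq_zero (hF : ∀ l, F.col l ∈ span R (range S.col))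
    (ρ : Fin (d + 1) → Fin n) (σ : Fin (d + 1) → Fin d ⊕ Fin c) :
    ((fromCols S F).submatrix ρ σ).det = 0 := by
  refine (fromCols S F).det_submatrix_eq_zero_of_col_mem_span (s := S.col) (by simp) ?_ ρ σ
  rintro (j | l)
  · exact subset_span (mem_range_self j)
  · exact hF l

theorem ιMulti_snoc_col_eq_zero {l : Fin c} (hF : F.col l ∈ span R (range S.col)) :
    ιMulti R (d + 1) (Fin.snoc S.col (F.col l)) = 0 := by
  refine AlternatingMap.map_eq_zero_of_forall_mem_span _ (s := S.col) (by simp) fun k => ?_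
  refine Fin.lastCases ?_ (fun j => ?_) k
  · rw [Fin.snoc_last]; exact hF
  · rw [Fin.snoc_castSucc]; exact subset_span (mem_range_self j)

theorem det_submatrix_fromCols_snoc_eq_zero {l : Fin c}
    (hw : ιMulti R (d + 1) (Fin.snoc S.col (F.col l)) = 0) (ρ : Fin (d + 1) → Fin n) :
    ((fromCols S F).submatrix ρ (Fin.snoc Sum.inl (Sum.inr l))).det = 0 := by
  rw [← minorAlternating_apply_col_comp, col_fromCols_comp_snoc]
  exact AlternatingMap.map_eq_zero_of_ιMulti_eq_zero _ hw

theorem col_mem_span_of_det_submatrix_fromCols_snoc_eq_zero {α : Fin d → Fin n}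
    (hα : IsUnit (S.submatrix α id).det) {l : Fin c}
    (h : ∀ i, ((fromCols S F).submatrix (Fin.snoc α i) (Fin.snoc Sum.inl (Sum.inr l))).det = 0) :
    F.col l ∈ span R (range S.col) := by
  set σ : Fin (d + 1) → Fin d ⊕ Fin c := Fin.snoc Sum.inl (Sum.inr l)
  have hminor : ((fromCols S F).submatrix α (σ ∘ Fin.castSucc)).det = (S.submatrix α id).det := by
    congr 1; ext; simp [σ]
  have key := ((fromCols S F).submatrix id σ).col_last_mem_span_of_det_submatrix_snoc_eq_zero
    (hminor ▸ hα) h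
  change ((fromCols S F).col ∘ σ) (Fin.last d) ∈
    span R (range (((fromCols S F).col ∘ σ) ∘ Fin.castSucc)) at key
  rwa [col_fromCols_comp_snoc, Fin.snoc_last, Fin.snoc_comp_castSucc] at key

end ColumnSpace

end

theorem stmt6_general (R : Type*) [CommRing R] (n d c : ℕ)
    (S : Matrix (Fin n) (Fin d) R) (F : Matrix (Fin n) (Fin c) R)
    (hS : ∃ α : Fin d → Fin n, StrictMono α ∧ IsUnit (S.submatrix α id).det) :
    ((Submodule.span R {v : Fin n → R | ∃ l : Fin c, v = fun i => F i l} ≤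
        Submodule.span R {v : Fin n → R | ∃ j : Fin d, v = fun i => S i j}) ↔
      ∀ (ρ : Fin (d + 1) → Fin n) (σ : Fin (d + 1) → Fin d ⊕ Fin c),
        ((Matrix.fromCols S F).submatrix ρ σ).det = 0) ∧
    ((Submodule.span R {v : Fin n → R | ∃ l : Fin c, v = fun i => F i l} ≤
        Submodule.span R {v : Fin n → R | ∃ j : Fin d, v = fun i => S i j}) ↔
      ∀ (ρ : Fin (d + 1) → Fin n) (τ : Fin d → Fin d) (l : Fin c),
        ((Matrix.fromCols S F).submatrix ρ (Fin.snoc (Sum.inl ∘ τ) (Sum.inr l))).det = 0) ∧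
    ((Submodule.span R {v : Fin n → R | ∃ l : Fin c, v = fun i => F i l} ≤
        Submodule.span R {v : Fin n → R | ∃ j : Fin d, v = fun i => S i j}) ↔
      ∀ l : Fin c,
        ((List.finRange d).map fun j => ExteriorAlgebra.ι R (fun i => S i j)).prod *
          ExteriorAlgebra.ι R (fun i => F i l) = 0) := by
  obtain ⟨α, -, hα⟩ := hS
  simp only [setOf_exists_eq_col, span_le, range_subset_iff, SetLike.mem_coe]
  have of_minors_snoc_eq_zero : (∀ ρ (τ : Fin d → Fin d) l,
      ((fromCols S F).submatrix ρ (Fin.snoc (Sum.inl ∘ τ) (Sum.inr l))).det = 0) →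
      ∀ l, F.col l ∈ span R (range S.col) := fun h l =>
    col_mem_span_of_det_submatrix_fromCols_snoc_eq_zero S F hα fun i => h _ id l
  refine ⟨⟨det_submatrix_fromCols_eq_zero S F, fun h => of_minors_snoc_eq_zero fun ρ _ _ => h ρ _⟩,
    ⟨fun h ρ _ _ => det_submatrix_fromCols_eq_zero S F h ρ _, of_minors_snoc_eq_zero⟩,
    ⟨fun h l => ?_, fun h l => ?_⟩⟩
  · exact (prod_map_ι_mul_ι _ _).trans (ιMulti_snoc_col_eq_zero S F (h l))
  · refine col_mem_span_of_det_submatrix_fromCols_snoc_eq_zero S F hα fun i => ?_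
    exact det_submatrix_fromCols_snoc_eq_zero S F ((prod_map_ι_mul_ι _ _).symm.trans (h l)) _

/-- Submodule criterion: over a local ring, with `S` an `n × d` matrix with a unit maximal
minor with column space `M`, and `F` an `n × c` matrix with column space `U`, the following are
equivalent: (1) `U ⊆ M`; (2) all `(d+1) × (d+1)` minors of `(S ∣ F)` vanish; (3) all such
minors using the `d` columns of `S` and one column of `F` vanish; (4) `p ∧ fᵢ = 0` where `p`
is the wedge of the columns of `S`. -/
theorem stmt6 (R : Type*) [CommRing R] [IsLocalRing R] (n d c : ℕ)
    (S : Matrix (Fin n) (Fin d) R) (F : Matrix (Fin n) (Fin c) R)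
    (hS : ∃ α : Fin d → Fin n, StrictMono α ∧ IsUnit (S.submatrix α id).det) :
    ((Submodule.span R {v : Fin n → R | ∃ l : Fin c, v = fun i => F i l} ≤
        Submodule.span R {v : Fin n → R | ∃ j : Fin d, v = fun i => S i j}) ↔
      ∀ (ρ : Fin (d + 1) → Fin n) (σ : Fin (d + 1) → Fin d ⊕ Fin c),
        ((Matrix.fromCols S F).submatrix ρ σ).det = 0) ∧
    ((Submodule.span R {v : Fin n → R | ∃ l : Fin c, v = fun i => F i l} ≤
        Submodule.span R {v : Fin n → R | ∃ j : Fin d, v = fun i => S i j}) ↔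
      ∀ (ρ : Fin (d + 1) → Fin n) (τ : Fin d → Fin d) (l : Fin c),
        ((Matrix.fromCols S F).submatrix ρ (Fin.snoc (Sum.inl ∘ τ) (Sum.inr l))).det = 0) ∧
    ((Submodule.span R {v : Fin n → R | ∃ l : Fin c, v = fun i => F i l} ≤
        Submodule.span R {v : Fin n → R | ∃ j : Fin d, v = fun i => S i j}) ↔
      ∀ l : Fin c,
        ((List.finRange d).map fun j => ExteriorAlgebra.ι R (fun i => S i j)).prod *
          ExteriorAlgebra.ι R (fun i => F i l) = 0) :=
  stmt6_general R n d c S F hS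
end

section
/- Let $R$ be a local ring, $V = R^n$, and let $p = m_0 \wedge \cdots \wedge m_{d-1} \in \bigwedge^d V$ be a decomposable element where $m_0,\dots,m_{d-1}$ are the columns of a matrix $S$ with some maximal minor a unit. Define $P : \bigwedge^{d-1} V^\vee \to V$ by $P(\omega) = \omega \lrcorner p$ (interior product, characterized by $\langle \varphi, \omega \lrcorner p\rangle = \langle \omega \wedge \varphi, p\rangle$ for all $\varphi \in V^\vee$). Then the image of $P$ equals the submodule $M \subseteq V$ generated by $m_0,\dots,m_{d-1}$. -/
/-- Basis-free Plücker matrix: for a decomposable `p = m₀ ∧ ⋯ ∧ m_d` (columns of a matrix `S`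
over a local ring with a unit maximal minor), the image of the interior-product map
`ω ↦ ω ⌟ p` on `⋀^{d} V^∨` equals the submodule generated by the `mᵢ`.  The interior product
against a decomposable `ω = φ₀ ∧ ⋯ ∧ φ_{d-1}` is characterized by
`⟨χ, ω ⌟ p⟩ = ⟨ω ∧ χ, p⟩ = det ((φ₀,…,φ_{d-1},χ)ᵢ (sⱼ))` for all `χ ∈ V^∨`, and the image of
the interior-product map is spanned by these values since decomposables span. -/
theorem stmt7 (R : Type*) [CommRing R] [IsLocalRing R] (n d : ℕ)
    (S : Matrix (Fin n) (Fin (d + 1)) R)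
    (hS : ∃ α : Fin (d + 1) → Fin n, StrictMono α ∧ IsUnit (S.submatrix α id).det) :
    Submodule.span R {v : Fin n → R |
      ∃ φ : Fin d → Module.Dual R (Fin n → R),
        ∀ χ : Module.Dual R (Fin n → R),
          χ v = (Matrix.of fun i j : Fin (d + 1) =>
            (Fin.snoc φ χ : Fin (d + 1) → Module.Dual R (Fin n → R)) i
              (fun a => S a j)).det} =
      Submodule.span R {v : Fin n → R | ∃ j : Fin (d + 1), v = fun i => S i j} := by
  apply le_antisymm
  · -- ⊆ : each such v is a combination of the columns
    rw [Submodule.span_le]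
    rintro v ⟨φ, hφ⟩
    -- cofactors don't depend on χ
    set c : Fin (d + 1) → R := fun j =>
      (-1 : R) ^ (d + (j : ℕ)) *
        (Matrix.of fun m l : Fin d => φ m (fun a => S a (j.succAbove l))).det with hc
    have key : ∀ χ : Module.Dual R (Fin n → R),
        χ v = ∑ j : Fin (d + 1), c j * χ (fun i => S i j) := by
      intro χ
      rw [hφ χ, Matrix.det_succ_row _ (Fin.last d)]
      refine Finset.sum_congr rfl fun j _ => ?_
      have h1 : (Matrix.of fun i j : Fin (d + 1) =>
          (Fin.snoc φ χ : Fin (d + 1) → Module.Dual R (Fin n → R)) i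
            (fun a => S a j)) (Fin.last d) j = χ (fun a => S a j) := by
        simp [Fin.snoc_last]
      have h2 : ((Matrix.of fun i j : Fin (d + 1) =>
          (Fin.snoc φ χ : Fin (d + 1) → Module.Dual R (Fin n → R)) i
            (fun a => S a j)).submatrix (Fin.last d).succAbove j.succAbove) =
          Matrix.of fun m l : Fin d => φ m (fun a => S a (j.succAbove l)) := by
        ext m l
        simp [Matrix.submatrix_apply, Fin.succAbove_last, Fin.snoc_castSucc]
      rw [h1, h2, hc]
      simp [Fin.val_last]
      ring
    have hv : v = ∑ j : Fin (d + 1), c j • (fun i => S i j) := by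
      funext i
      have := key (LinearMap.proj i)
      simpa [Finset.sum_apply, Pi.smul_apply, smul_eq_mul] using this
    rw [hv]
    exact Submodule.sum_mem _ fun j _ =>
      Submodule.smul_mem _ _ (Submodule.subset_span ⟨j, rfl⟩)
  · -- ⊇ : each column is obtained (up to sign) from a suitable φ
    rw [Submodule.span_le]
    rintro v ⟨k, rfl⟩
    obtain ⟨α, -, hdet⟩ := hS
    set A : Matrix (Fin (d + 1)) (Fin (d + 1)) R := S.submatrix α id with hA
    have hBA : A⁻¹ * A = 1 := Matrix.nonsing_inv_mul A hdet
    -- dual functionals with ψ i (col j) = δ i j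
    set ψ : Fin (d + 1) → Module.Dual R (Fin n → R) := fun i =>
      ∑ l : Fin (d + 1), A⁻¹ i l • (LinearMap.proj (α l) : (Fin n → R) →ₗ[R] R) with hψdef
    have hψ : ∀ i j : Fin (d + 1), ψ i (fun a => S a j) = if i = j then 1 else 0 := by
      intro i j
      have : ψ i (fun a => S a j) = ∑ l : Fin (d + 1), A⁻¹ i l * A l j := by
        simp [hψdef, LinearMap.sum_apply, LinearMap.smul_apply, hA,
          Matrix.submatrix_apply, smul_eq_mul]
      rw [this, ← Matrix.mul_apply, hBA, Matrix.one_apply]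
    set s : R := (-1 : R) ^ (d + (k : ℕ)) with hs
    have hss : s * s = 1 := by
      rw [hs, ← pow_add]
      exact Even.neg_one_pow ⟨d + k, by ring⟩
    have hmem : s • (fun i => S i k) ∈ Submodule.span R {v : Fin n → R |
        ∃ φ : Fin d → Module.Dual R (Fin n → R),
          ∀ χ : Module.Dual R (Fin n → R),
            χ v = (Matrix.of fun i j : Fin (d + 1) =>
              (Fin.snoc φ χ : Fin (d + 1) → Module.Dual R (Fin n → R)) i
                (fun a => S a j)).det} := by
      apply Submodule.subset_span
      refine ⟨fun m => ψ (k.succAbove m), fun χ => ?_⟩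
      rw [map_smul, Matrix.det_succ_row _ (Fin.last d)]
      rw [Finset.sum_eq_single k]
      · have h1 : (Matrix.of fun i j : Fin (d + 1) =>
            (Fin.snoc (fun m => ψ (k.succAbove m)) χ : Fin (d + 1) → Module.Dual R (Fin n → R)) i
              (fun a => S a j)) (Fin.last d) k = χ (fun a => S a k) := by
          simp [Fin.snoc_last]
        have h2 : ((Matrix.of fun i j : Fin (d + 1) =>
            (Fin.snoc (fun m => ψ (k.succAbove m)) χ : Fin (d + 1) → Module.Dual R (Fin n → R)) i
              (fun a => S a j)).submatrix (Fin.last d).succAbove k.succAbove).det = 1 := by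
          have : ((Matrix.of fun i j : Fin (d + 1) =>
              (Fin.snoc (fun m => ψ (k.succAbove m)) χ : Fin (d + 1) → Module.Dual R (Fin n → R)) i
                (fun a => S a j)).submatrix (Fin.last d).succAbove k.succAbove) = 1 := by
            ext m l
            simp only [Matrix.submatrix_apply, Fin.succAbove_last, Matrix.of_apply,
              Fin.snoc_castSucc]
            rw [hψ]
            simp [Fin.succAbove_right_inj, Matrix.one_apply, eq_comm]
          rw [this, Matrix.det_one]
        rw [h1, h2, hs]
        simp [Fin.val_last, smul_eq_mul]
      · intro j _ hj
        have h0 : ((Matrix.of fun i j : Fin (d + 1) =>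
            (Fin.snoc (fun m => ψ (k.succAbove m)) χ : Fin (d + 1) → Module.Dual R (Fin n → R)) i
              (fun a => S a j)).submatrix (Fin.last d).succAbove j.succAbove).det = 0 := by
          obtain ⟨l₀, hl₀⟩ := Fin.exists_succAbove_eq (Ne.symm hj)
          apply Matrix.det_eq_zero_of_column_eq_zero l₀
          intro m
          simp only [Matrix.submatrix_apply, Fin.succAbove_last, Matrix.of_apply,
            Fin.snoc_castSucc]
          rw [hψ, hl₀]
          simp [Fin.succAbove_ne]
        rw [h0]
        ring
      · intro h
        exact absurd (Finset.mem_univ k) h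
    have : (fun i => S i k) = s • (s • (fun i => S i k)) := by
      rw [smul_smul, hss, one_smul]
    rw [this]
    exact Submodule.smul_mem _ _ hmem
end

section
/- Let $R$ be a local ring and let $p = \sum_{\alpha} p_\alpha e_\alpha \in \bigwedge^d R^n$ be the Plücker vector of a Stiefel matrix $S$ (i.e., $p = s_0 \wedge \cdots \wedge s_{d-1}$ where $s_j$ are the columns of $S$ and some $p_\alpha$ is a unit). Let $M = \mathrm{im}\,S$. Then a vector $f \in R^n$ lies in $M$ if and only if $p \wedge f = 0$ in $\bigwedge^{d+1} R^n$. -/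
open ExteriorAlgebra Matrix

/-- Coefficient extraction: if a wedge of `d+1` vectors vanishes, then the determinant of
any `(d+1)×(d+1)` matrix of selected coordinates vanishes. -/
theorem aux_coeff {R : Type*} [CommRing R] (n d : ℕ) (β : Fin (d+1) → Fin n)
    (v : Fin (d+1) → Fin n → R) (hv : ExteriorAlgebra.ιMulti R (d+1) v = 0) :
    (Matrix.of fun r c => v r (β c)).det = 0 := by
  classical
  set D : (Fin n → R) [⋀^Fin (d+1)]→ₗ[R] R :=
    (Matrix.detRowAlternating).compLinearMap (LinearMap.funLeft R R β) with hD
  set F : ∀ k : ℕ, (Fin n → R) [⋀^Fin k]→ₗ[R] R := Function.update (fun _ => 0) (d+1) D with hF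
  have h1 : ExteriorAlgebra.liftAlternating F (ExteriorAlgebra.ιMulti R (d+1) v) = F (d+1) v :=
    ExteriorAlgebra.liftAlternating_apply_ιMulti F v
  rw [hv, map_zero] at h1
  have h2 : F (d+1) = D := Function.update_self _ _ _
  rw [h2] at h1
  have : D v = Matrix.det (Matrix.of fun r c => v r (β c)) := by
    rw [hD]
    rfl
  rw [this] at h1
  exact h1.symm

/-- For the Plücker vector `p = s₀ ∧ ⋯ ∧ s_{d-1}` of a Stiefel matrix `S` over a local ring
(some maximal minor of `S`, i.e. some Plücker coordinate, being a unit), a vector `f ∈ R^n`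
lies in the column space `M = im S` iff `p ∧ f = 0`. -/
theorem stmt19 (R : Type*) [CommRing R] [IsLocalRing R] (n d : ℕ)
    (S : Matrix (Fin n) (Fin d) R)
    (hS : ∃ α : Fin d → Fin n, StrictMono α ∧ IsUnit (S.submatrix α id).det)
    (f : Fin n → R) :
    ((List.finRange d).map fun j => ExteriorAlgebra.ι R (fun i => S i j)).prod *
        ExteriorAlgebra.ι R f = 0 ↔
      f ∈ Submodule.span R {v : Fin n → R | ∃ j : Fin d, v = fun i => S i j} := by
  classical
  obtain ⟨α, hmono, hunit⟩ := hS
  set s : Fin d → (Fin n → R) := fun j i => S i j with hs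
  set p : ExteriorAlgebra R (Fin n → R) :=
    ((List.finRange d).map fun j => ExteriorAlgebra.ι R (s j)).prod with hp
  have key : ∀ x : Fin n → R,
      p * ExteriorAlgebra.ι R x = ExteriorAlgebra.ιMulti R (d+1) (Fin.snoc s x) := by
    intro x
    rw [ExteriorAlgebra.ιMulti_apply, List.ofFn_succ', List.concat_eq_append,
      List.prod_append, List.prod_singleton, Fin.snoc_last, hp, List.ofFn_eq_map]
    congr 2
    apply List.map_congr_left
    intro j _
    rw [Fin.snoc_castSucc]
  have hgen : ∀ j : Fin d, p * ExteriorAlgebra.ι R (s j) = 0 := by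
    intro j
    rw [key]
    exact AlternatingMap.map_eq_zero_of_eq _ _
      (i := Fin.castSucc j) (j := Fin.last d)
      (by rw [Fin.snoc_castSucc, Fin.snoc_last]) (Fin.ne_of_lt (Fin.castSucc_lt_last j))
  set L : (Fin n → R) →ₗ[R] ExteriorAlgebra R (Fin n → R) :=
    (LinearMap.mulLeft R p).comp (ExteriorAlgebra.ι R) with hL
  have hLapp : ∀ x, L x = p * ExteriorAlgebra.ι R x := fun _ => rfl
  constructor
  · -- forward direction
    intro h
    set A : Matrix (Fin d) (Fin d) R := S.submatrix α id with hA
    set c : Fin d → R := Matrix.mulVec A⁻¹ (f ∘ α) with hc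
    have hAc : A *ᵥ c = f ∘ α := by
      rw [hc, Matrix.mulVec_mulVec, Matrix.mul_nonsing_inv A hunit, Matrix.one_mulVec]
    set g : Fin n → R := f - S *ᵥ c with hg
    have hScsum : S *ᵥ c = ∑ j : Fin d, c j • s j := by
      funext i
      simp only [Matrix.mulVec, dotProduct, Finset.sum_apply, Pi.smul_apply, hs,
        smul_eq_mul]
      exact Finset.sum_congr rfl fun j _ => mul_comm _ _
    have hSc0 : p * ExteriorAlgebra.ι R (S *ᵥ c) = 0 := by
      rw [← hLapp, hScsum, map_sum]
      refine Finset.sum_eq_zero fun j _ => ?_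
      rw [_root_.map_smul, hLapp, hgen j, smul_zero]
    have hgα : ∀ i0 : Fin d, g (α i0) = 0 := by
      intro i0
      have : (S *ᵥ c) (α i0) = (A *ᵥ c) i0 := rfl
      rw [hg, Pi.sub_apply, this, hAc]
      simp
    have hpg : p * ExteriorAlgebra.ι R g = 0 := by
      rw [← hLapp, hg, map_sub, hLapp, hLapp, h, hSc0, sub_zero]
    have hg0 : g = 0 := by
      funext i
      have h0 := aux_coeff n d (Fin.snoc α i : Fin (d+1) → Fin n) (Fin.snoc s g : Fin (d+1) → Fin n → R) (by rw [← key]; exact hpg)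
      set M : Matrix (Fin (d+1)) (Fin (d+1)) R :=
        Matrix.of fun r c' => (Fin.snoc s g : Fin (d+1) → Fin n → R) r ((Fin.snoc α i : Fin (d+1) → Fin n) c') with hM
      rw [Matrix.det_succ_row M (Fin.last d)] at h0
      rw [Fin.sum_univ_castSucc] at h0
      have hzero : ∀ j : Fin d,
          (-1 : R) ^ ((Fin.last d : Fin (d+1)) + (Fin.castSucc j) : ℕ) *
            M (Fin.last d) (Fin.castSucc j) *
            (M.submatrix (Fin.last d).succAbove (Fin.castSucc j).succAbove).det = 0 := by
        intro j
        have : M (Fin.last d) (Fin.castSucc j) = 0 := by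
          show (Fin.snoc s g : Fin (d+1) → Fin n → R) (Fin.last d) ((Fin.snoc α i : Fin (d+1) → Fin n) (Fin.castSucc j)) = 0
          rw [Fin.snoc_last, Fin.snoc_castSucc]
          exact hgα j
        rw [this, mul_zero, zero_mul]
      rw [Finset.sum_eq_zero fun j _ => hzero j, zero_add] at h0
      have hMll : M (Fin.last d) (Fin.last d) = g i := by
        show (Fin.snoc s g : Fin (d+1) → Fin n → R) (Fin.last d) ((Fin.snoc α i : Fin (d+1) → Fin n) (Fin.last d)) = g i
        rw [Fin.snoc_last, Fin.snoc_last]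
      have hminor : M.submatrix (Fin.last d).succAbove (Fin.last d).succAbove = Aᵀ := by
        funext r c'
        rw [Fin.succAbove_last]
        show (Fin.snoc s g : Fin (d+1) → Fin n → R) (Fin.castSucc r) ((Fin.snoc α i : Fin (d+1) → Fin n) (Fin.castSucc c')) = Aᵀ r c'
        rw [Fin.snoc_castSucc, Fin.snoc_castSucc]
        rfl
      have hsign : (-1 : R) ^ ((Fin.last d : Fin (d+1)) + (Fin.last d : Fin (d+1)) : ℕ) = 1 :=
        Even.neg_one_pow ⟨d, rfl⟩
      rw [hMll, hminor, Matrix.det_transpose, hsign, one_mul] at h0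
      have hinv : A.det * (↑hunit.unit⁻¹ : R) = 1 := by
        have h1 : (↑hunit.unit : R) * ↑hunit.unit⁻¹ = 1 := hunit.unit.mul_inv
        rwa [hunit.unit_spec] at h1
      calc g i = g i * (A.det * ↑hunit.unit⁻¹) := by rw [hinv, mul_one]
        _ = g i * A.det * ↑hunit.unit⁻¹ := by rw [mul_assoc]
        _ = 0 := by rw [h0, zero_mul]
    have hf : f = ∑ j : Fin d, c j • s j := by
      have h' : f - S *ᵥ c = 0 := by rw [← hg, hg0]
      rw [sub_eq_zero] at h'
      rw [h', hScsum]
    rw [hf]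
    exact Submodule.sum_mem _ fun j _ => Submodule.smul_mem _ _
      (Submodule.subset_span ⟨j, rfl⟩)
  · intro hmem
    have hsub : Submodule.span R {v : Fin n → R | ∃ j : Fin d, v = fun i => S i j} ≤
        LinearMap.ker L := by
      rw [Submodule.span_le]
      rintro v ⟨j, rfl⟩
      exact hgen j
    exact hsub hmem
end
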